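/- arXiv:0812.0435 — 2 statements merged into one kernel-verified Lean document; each statement's English description precedes it below -/
import Mathlib

section
/- Let D be an almost skew diagram, let i be the maximum index with l_{i−1} > l_i, and suppose Step B is permitted at row i (r_i ≤ r_{i−1} − 1). Let D^B be the result of performing Step B at row i, with ψ the induced row-preserving bijection from the boxes of D to the boxes of D^B and all elements associated to D^B regarded in ℂ[Σ_D] via ψ. Then for every set V of left coset representatives of C_D ∩ C_{D^B} in C_{D^B}, the identity C(D^B)·R(D^B) = (Σ_{σ ∈ V} sgn(σ)·σ)·C(D)·R(D) holds in ℂ[Σ_D]; consequently the Specht module V^{D^B} is contained in V^D. -/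
open scoped ENat

/-- A diagram: a finite set of boxes `(i, j)` (row `i` from the top, column `j` from the left). -/
abbrev Dg := Finset (ℕ × ℕ)

/-- The set of column indices of boxes in row `i` of `D`. -/
def row (D : Dg) (i : ℕ) : Finset ℕ := (D.filter (fun b => b.1 = i)).image Prod.snd

/-- `l_i`: the least column index in row `i`, with the convention `l_i = ∞` for an empty row. -/
noncomputable def lRow (D : Dg) (i : ℕ) : ℕ∞ := (row D i).inf (fun j => (j : ℕ∞))

/-- `r_i`: the greatest column index in row `i`, with the convention `r_i = 0` for an empty row. -/
def rRow (D : Dg) (i : ℕ) : ℕ := (row D i).sup id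

/-- Index `i ≥ 2` with `l_{i-1} > l_i`. -/
def Violation (D : Dg) (i : ℕ) : Prop := 2 ≤ i ∧ lRow D i < lRow D (i - 1)

/-- `i` is the maximum index with `l_{i-1} > l_i`. -/
def MaxViolation (D : Dg) (i : ℕ) : Prop := Violation D i ∧ ∀ i', Violation D i' → i' ≤ i

/-- No index `i ≥ 2` has `l_{i-1} > l_i`. -/
def TerminalD (D : Dg) : Prop := ∀ i, ¬ Violation D i

/-- Step A is permitted at row `i`: `l_{i-1} > l_i` and (`r_i ≥ l_{i-1} - 1` or row `i-1` empty). -/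
def StepAOk (D : Dg) (i : ℕ) : Prop :=
  Violation D i ∧ (lRow D (i - 1) - 1 ≤ (rRow D i : ℕ∞) ∨ row D (i - 1) = ∅)

/-- `l_i ≤ q < l_{i-1}`: the columns affected by Step A at row `i`. -/
def InL (D : Dg) (i q : ℕ) : Prop := lRow D i ≤ (q : ℕ∞) ∧ (q : ℕ∞) < lRow D (i - 1)

/-- `D'` is the result of performing Step A on `D` at row `i`: for each column
`l_i ≤ q < l_{i-1}`, membership of `(i, q)` and `(i-1, q)` is exchanged. -/
def IsStepA (D D' : Dg) (i : ℕ) : Prop :=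
  ∀ p q : ℕ,
    (p = i → InL D i q → ((p, q) ∈ D' ↔ (i - 1, q) ∈ D)) ∧
    (p = i - 1 → InL D i q → ((p, q) ∈ D' ↔ (i, q) ∈ D)) ∧
    (¬((p = i ∨ p = i - 1) ∧ InL D i q) → ((p, q) ∈ D' ↔ (p, q) ∈ D))

/-- Step B is permitted at row `i`: `l_{i-1} > l_i` and `r_i ≤ r_{i-1} - 1`. -/
def StepBOk (D : Dg) (i : ℕ) : Prop :=
  Violation D i ∧ rRow D i ≤ rRow D (i - 1) - 1

/-- The rows affected by Step B at row `i`: rows `p ≥ i` with `l_p = l_i`. -/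
def BRow (D : Dg) (i p : ℕ) : Prop := i ≤ p ∧ lRow D p = lRow D i

/-- `D'` is the result of performing Step B on `D` at row `i`: in each row `p ≥ i` with
`l_p = l_i`, the box `(p, l_p)` is removed and the box `(p, r_p + 1)` is added. -/
def IsStepB (D D' : Dg) (i : ℕ) : Prop :=
  ∀ p q : ℕ,
    (BRow D i p →
      ((p, q) ∈ D' ↔ (((p, q) ∈ D ∧ (q : ℕ∞) ≠ lRow D p) ∨ q = rRow D p + 1))) ∧
    (¬ BRow D i p → ((p, q) ∈ D' ↔ (p, q) ∈ D))

/-- One step of Algorithm 1: at the maximum index `i` with `l_{i-1} > l_i`, perform a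
permitted Step A or Step B. -/
def AlgStep (D D' : Dg) : Prop :=
  ∃ i, MaxViolation D i ∧ ((StepAOk D i ∧ IsStepA D D' i) ∨ (StepBOk D i ∧ IsStepB D D' i))

/-- An execution of Algorithm 1 starting from `D0`: a finite sequence of diagrams beginning
at `D0`, each obtained from the previous by a step of Algorithm 1, ending at a terminal
diagram. -/
def IsExec (D0 : Dg) (L : List Dg) : Prop :=
  L.head? = some D0 ∧ L.Chain' AlgStep ∧ ∀ Dl, L.getLast? = some Dl → TerminalD Dl

/-- The indices of nonempty rows of `D`, from top to bottom. -/
def rowIdx (D : Dg) : List ℕ := (D.image Prod.fst).sort (· ≤ ·)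

/-- The lengths of the nonempty rows of `D`, read from top to bottom. -/
def rowLengths (D : Dg) : List ℕ := (rowIdx D).map (fun p => (row D p).card)

/-- The execution `L` terminates at a diagram whose nonempty rows, read from top to bottom,
have lengths `ν 1, ν 2, …`. -/
def EndsAt (L : List Dg) (ν : ℕ → ℕ) : Prop :=
  ∃ Dl, L.getLast? = some Dl ∧ ∀ m : ℕ, (rowLengths Dl).getD m 0 = ν (m + 1)

/-- A partition, written as a weakly decreasing function on indices `1, 2, …`. -/
def IsPartition (f : ℕ → ℕ) : Prop := f 0 = 0 ∧ ∀ p, 1 ≤ p → f (p + 1) ≤ f p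

/-- The partition `f` is contained in the `k × w` rectangle. -/
def InRect (f : ℕ → ℕ) (k w : ℕ) : Prop := (∀ p, k < p → f p = 0) ∧ ∀ p, f p ≤ w

/-- The skew Young diagram `lam / mu` (boxes of `lam` not in `mu`), rows `1, …, k`. -/
def skewD (lam mu : ℕ → ℕ) (k : ℕ) : Dg :=
  (Finset.Icc 1 k).biUnion (fun p => (Finset.Icc (mu p + 1) (lam p)).image (fun q => (p, q)))

/-- `lam^∨`, the complementary partition of `lam` inside the `k × w` rectangle. -/
def dualP (lam : ℕ → ℕ) (k w : ℕ) : ℕ → ℕ :=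
  fun p => if 1 ≤ p ∧ p ≤ k then w - lam (k + 1 - p) else 0

/-- `D` is row convex. -/
def RowConvex (D : Dg) : Prop :=
  ∀ i j j' j'', (i, j) ∈ D → (i, j') ∈ D → j ≤ j'' → j'' ≤ j' → (i, j'') ∈ D

/-- `l` is weakly increasing on positions `s, s+1, …, t`. -/
def MonoL (l : ℕ → ℕ∞) (s t : ℕ) : Prop := ∀ p q, s ≤ p → p ≤ q → q ≤ t → l p ≤ l q

/-- `l` is weakly decreasing on positions `s, s+1, …, t`. -/
def AntiL (l : ℕ → ℕ∞) (s t : ℕ) : Prop := ∀ p q, s ≤ p → p ≤ q → q ≤ t → l q ≤ l p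

/-- The sequence `(l_1, …, l_k)` of leftmost column indices of `D` has, for some indices
`1 ≤ a ≤ i ≤ k`, either the form `l_i ≤ l_{i+1} ≤ … ≤ l_k ≤ l_{i-1} ≤ l_{i-2} ≤ … ≤ l_1`,
or the form
`l_a ≤ … ≤ l_{i-2} ≤ l_i ≤ … ≤ l_k ≤ l_{i-1} ≤ l_{a-1} ≤ … ≤ l_1`. -/
def LShape (D : Dg) (k : ℕ) : Prop :=
  ∃ a i, 1 ≤ a ∧ a ≤ i ∧ i ≤ k ∧
    ((MonoL (lRow D) i k ∧ (2 ≤ i → lRow D k ≤ lRow D (i - 1)) ∧ AntiL (lRow D) 1 (i - 1)) ∨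
     (2 ≤ i ∧ MonoL (lRow D) a (i - 2) ∧ (a ≤ i - 2 → lRow D (i - 2) ≤ lRow D i) ∧
      MonoL (lRow D) i k ∧ lRow D k ≤ lRow D (i - 1) ∧
      (2 ≤ a → lRow D (i - 1) ≤ lRow D (a - 1)) ∧ AntiL (lRow D) 1 (a - 1)))

/-- `D` is almost skew with nonempty rows exactly `1, …, k`: it is row convex, its `r_i`
are weakly decreasing, and its `l_i` satisfy one of the two inequality chains above. -/
def AlmostSkew (D : Dg) (k : ℕ) : Prop :=
  (∀ p, (row D p).Nonempty ↔ 1 ≤ p ∧ p ≤ k) ∧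
  RowConvex D ∧
  (∀ p q, 1 ≤ p → p ≤ q → q ≤ k → rRow D q ≤ rRow D p) ∧
  LShape D k

/-- The sum `Σ σ` over all permutations preserving the value of `g` (e.g. the row or the
column of every box), in the group algebra `ℂ[Perm α]`. -/
noncomputable def Rsum {α : Type} [Fintype α] [DecidableEq α] (g : α → ℕ) :
    MonoidAlgebra ℂ (Equiv.Perm α) :=
  ∑ σ ∈ Finset.univ.filter (fun σ : Equiv.Perm α => ∀ b, g (σ b) = g b),
    MonoidAlgebra.single σ 1

/-- The signed sum `Σ sgn(σ)·σ` over all permutations preserving the value of `g`, in the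
group algebra `ℂ[Perm α]`. -/
noncomputable def Csum {α : Type} [Fintype α] [DecidableEq α] (g : α → ℕ) :
    MonoidAlgebra ℂ (Equiv.Perm α) :=
  ∑ σ ∈ Finset.univ.filter (fun σ : Equiv.Perm α => ∀ b, g (σ b) = g b),
    MonoidAlgebra.single σ ((Equiv.Perm.sign σ : ℤ) : ℂ)

namespace St15


variable {α : Type} [Fintype α] [DecidableEq α]

noncomputable def sg (σ : Equiv.Perm α) : ℂ := ((Equiv.Perm.sign σ : ℤ) : ℂ)

lemma sg_mul (a b : Equiv.Perm α) : sg (a * b) = sg a * sg b := by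
  simp [sg, map_mul]

lemma sg_mul_self (a : Equiv.Perm α) : sg a * sg a = 1 := by
  rcases Int.units_eq_one_or (Equiv.Perm.sign a) with h | h <;> simp [sg, h]

omit [Fintype α] [DecidableEq α] in
lemma pres_inv {f : α → ℕ} {σ : Equiv.Perm α} (h : ∀ b, f (σ b) = f b) :
    ∀ b, f (σ⁻¹ b) = f b := fun b => by
  conv_rhs => rw [← Equiv.apply_symm_apply σ b, h]
  rfl

omit [Fintype α] [DecidableEq α] in
lemma pres_mul {f : α → ℕ} {σ τ : Equiv.Perm α} (h : ∀ b, f (σ b) = f b)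
    (h' : ∀ b, f (τ b) = f b) : ∀ b, f ((σ * τ) b) = f b := fun b => by
  simp only [Equiv.Perm.mul_apply, h, h']

lemma csum_eq_sum (f : α → ℕ)
    {inst : DecidablePred fun σ : Equiv.Perm α => ∀ b, f (σ b) = f b} :
    Csum f = ∑ σ ∈ @Finset.filter _ _ inst Finset.univ, MonoidAlgebra.single σ (sg σ) := by
  rw [Csum]
  refine Finset.sum_congr ?_ (fun _ _ => rfl)
  congr 1

lemma csum_mul_single (f : α → ℕ) (t : Equiv.Perm α) (ht : ∀ b, f (t b) = f b) :
    Csum f * MonoidAlgebra.single t 1 = sg t • Csum f := by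
  classical
  rw [Csum, Finset.sum_mul, Finset.smul_sum]
  refine Finset.sum_equiv (Equiv.mulRight t) (fun σ => ?_) (fun σ hσ => ?_)
  · simp only [Finset.mem_filter, Finset.mem_univ, true_and, Equiv.coe_mulRight]
    constructor
    · intro h; exact pres_mul h ht
    · intro h
      have := pres_mul h (pres_inv ht)
      simpa [mul_assoc] using this
  · rw [MonoidAlgebra.single_mul_single, mul_one, Equiv.coe_mulRight,
      MonoidAlgebra.smul_single']
    congr 1
    show sg σ = sg t * sg (σ * t)
    rw [sg_mul, mul_comm (sg σ), ← mul_assoc, sg_mul_self, one_mul]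

lemma single_mul_rsum (f : α → ℕ) (s : Equiv.Perm α) (hs : ∀ b, f (s b) = f b) :
    MonoidAlgebra.single s (1 : ℂ) * Rsum f = Rsum f := by
  classical
  rw [Rsum, Finset.mul_sum]
  refine Finset.sum_equiv (Equiv.mulLeft s) (fun σ => ?_) (fun σ hσ => ?_)
  · simp only [Finset.mem_filter, Finset.mem_univ, true_and, Equiv.coe_mulLeft]
    constructor
    · intro h; exact pres_mul hs h
    · intro h
      have := pres_mul (pres_inv hs) h
      simpa [← mul_assoc] using this
  · rw [MonoidAlgebra.single_mul_single, one_mul, Equiv.coe_mulLeft]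

lemma garnir (f₂ fr : α → ℕ) (g : Equiv.Perm α) (z₁ z₂ : α) (hrow : fr z₁ = fr z₂)
    (hne : z₁ ≠ z₂) (hψeq : f₂ (g z₁) = f₂ (g z₂)) :
    Csum f₂ * MonoidAlgebra.single g (1 : ℂ) * Rsum fr = 0 := by
  classical
  set s := Equiv.swap z₁ z₂ with hsdef
  set t := Equiv.swap (g z₁) (g z₂) with htdef
  have hgne : g z₁ ≠ g z₂ := fun h => hne (g.injective h)
  have hts : t * g = g * s := by
    ext x
    simp only [Equiv.Perm.mul_apply, hsdef, htdef]
    by_cases h1 : x = z₁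
    · subst h1; rw [Equiv.swap_apply_left, Equiv.swap_apply_left]
    by_cases h2 : x = z₂
    · subst h2; rw [Equiv.swap_apply_right, Equiv.swap_apply_right]
    · rw [Equiv.swap_apply_of_ne_of_ne h1 h2,
        Equiv.swap_apply_of_ne_of_ne (fun h => h1 (g.injective h))
          (fun h => h2 (g.injective h))]
  have hs_row : ∀ b, fr (s b) = fr b := by
    intro b
    rcases eq_or_ne b z₁ with rfl | h1
    · rw [hsdef, Equiv.swap_apply_left]; exact hrow.symm
    rcases eq_or_ne b z₂ with rfl | h2
    · rw [hsdef, Equiv.swap_apply_right]; exact hrow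
    · rw [hsdef, Equiv.swap_apply_of_ne_of_ne h1 h2]
  have ht_ψ : ∀ b, f₂ (t b) = f₂ b := by
    intro b
    rcases eq_or_ne b (g z₁) with rfl | h1
    · rw [htdef, Equiv.swap_apply_left]; exact hψeq.symm
    rcases eq_or_ne b (g z₂) with rfl | h2
    · rw [htdef, Equiv.swap_apply_right]; exact hψeq
    · rw [htdef, Equiv.swap_apply_of_ne_of_ne h1 h2]
  have hsgt : sg t = -1 := by
    rw [sg, htdef, Equiv.Perm.sign_swap hgne]; simp
  have key : Csum f₂ * MonoidAlgebra.single g 1 * Rsum fr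
      = -(Csum f₂ * MonoidAlgebra.single g 1 * Rsum fr) := by
    have hsplit : MonoidAlgebra.single (t * g) (1 : ℂ)
        = MonoidAlgebra.single t 1 * MonoidAlgebra.single g 1 := by
      rw [MonoidAlgebra.single_mul_single, one_mul]
    conv_lhs => rw [← single_mul_rsum fr s hs_row]
    rw [← mul_assoc, mul_assoc (Csum f₂), MonoidAlgebra.single_mul_single, one_mul,
      ← hts, hsplit, ← mul_assoc, csum_mul_single f₂ t ht_ψ, hsgt, smul_mul_assoc,
      smul_mul_assoc, neg_one_smul]
  have h2 : (2 : ℂ) • (Csum f₂ * MonoidAlgebra.single g 1 * Rsum fr) = 0 := by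
    rw [two_smul]
    nth_rewrite 1 [key]
    exact neg_add_cancel _
  rcases smul_eq_zero.mp h2 with h | h
  · exact absurd h two_ne_zero
  · exact h

lemma main_identity (f₁ f₂ fr : α → ℕ) (V : Finset (Equiv.Perm α))
    (hV1 : ∀ σ ∈ V, ∀ b, f₂ (σ b) = f₂ b)
    (hV2 : ∀ τ : Equiv.Perm α, (∀ b, f₂ (τ b) = f₂ b) →
      ∃! σ, σ ∈ V ∧ (∀ b, f₁ ((σ⁻¹ * τ) b) = f₁ b) ∧ (∀ b, f₂ ((σ⁻¹ * τ) b) = f₂ b))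
    (hG : ∀ g : Equiv.Perm α, (∀ b, f₁ (g b) = f₁ b) → ¬(∀ b, f₂ (g b) = f₂ b) →
      ∃ z₁ z₂ : α, fr z₁ = fr z₂ ∧ z₁ ≠ z₂ ∧ f₂ (g z₁) = f₂ (g z₂)) :
    Csum f₂ * Rsum fr =
      (∑ σ ∈ V, MonoidAlgebra.single σ ((Equiv.Perm.sign σ : ℤ) : ℂ)) *
        (Csum f₁ * Rsum fr) := by
  classical
  have hVsg : (∑ σ ∈ V, MonoidAlgebra.single σ ((Equiv.Perm.sign σ : ℤ) : ℂ))
      = ∑ σ ∈ V, MonoidAlgebra.single σ (sg σ) := rfl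
  rw [hVsg]
  set EV : MonoidAlgebra ℂ (Equiv.Perm α) := ∑ σ ∈ V, MonoidAlgebra.single σ (sg σ) with hEV
  set CDf : Finset (Equiv.Perm α) :=
    Finset.univ.filter (fun σ => ∀ b, f₁ (σ b) = f₁ b) with hCDf
  set GS : Finset (Equiv.Perm α) :=
    Finset.univ.filter (fun σ => ∀ b, f₂ (σ b) = f₂ b) with hGS
  set Hs : Finset (Equiv.Perm α) :=
    Finset.univ.filter (fun σ => (∀ b, f₁ (σ b) = f₁ b) ∧ (∀ b, f₂ (σ b) = f₂ b)) with hHs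
  have memCDf : ∀ σ : Equiv.Perm α, σ ∈ CDf ↔ ∀ b, f₁ (σ b) = f₁ b := fun σ => by
    rw [hCDf]; simp
  have memGS : ∀ σ : Equiv.Perm α, σ ∈ GS ↔ ∀ b, f₂ (σ b) = f₂ b := fun σ => by
    rw [hGS]; simp
  have memHs : ∀ σ : Equiv.Perm α,
      σ ∈ Hs ↔ (∀ b, f₁ (σ b) = f₁ b) ∧ (∀ b, f₂ (σ b) = f₂ b) := fun σ => by
    rw [hHs]; simp
  set EH : MonoidAlgebra ℂ (Equiv.Perm α) := ∑ σ ∈ Hs, MonoidAlgebra.single σ (sg σ) with hEH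
  set S : MonoidAlgebra ℂ (Equiv.Perm α) :=
    ∑ g ∈ CDf \ Hs, MonoidAlgebra.single g (sg g) with hS
  -- factorization Csum f₂ = EV * EH
  have hbij : (∑ p ∈ V ×ˢ Hs, MonoidAlgebra.single (p.1 * p.2) (sg p.1 * sg p.2))
      = ∑ τ ∈ GS, MonoidAlgebra.single τ (sg τ) := by
    refine Finset.sum_bij' (i := fun p _ => p.1 * p.2)
      (j := fun τ hτ => ((hV2 τ ((memGS τ).1 hτ)).choose,
        ((hV2 τ ((memGS τ).1 hτ)).choose)⁻¹ * τ)) ?_ ?_ ?_ ?_ ?_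
    · rintro ⟨σ, h⟩ hp
      rw [Finset.mem_product] at hp
      exact (memGS _).2 (pres_mul (hV1 σ hp.1) ((memHs h).1 hp.2).2)
    · intro τ hτ
      have hspec := (hV2 τ ((memGS τ).1 hτ)).choose_spec
      rw [Finset.mem_product]
      exact ⟨hspec.1.1, (memHs _).2 ⟨hspec.1.2.1, hspec.1.2.2⟩⟩
    · rintro ⟨σ, h⟩ hp
      rw [Finset.mem_product] at hp
      have hτ : ∀ b, f₂ ((σ * h) b) = f₂ b := pres_mul (hV1 σ hp.1) ((memHs h).1 hp.2).2
      have hspec := (hV2 (σ * h) hτ).choose_spec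
      have hσ : σ = (hV2 (σ * h) hτ).choose := by
        refine hspec.2 σ ⟨hp.1, ?_, ?_⟩
        · rw [inv_mul_cancel_left]; exact ((memHs h).1 hp.2).1
        · rw [inv_mul_cancel_left]; exact ((memHs h).1 hp.2).2
      have h1 : (hV2 (σ * h) hτ).choose = σ := hσ.symm
      simp only [h1, Prod.mk.injEq]
      refine ⟨by trivial, ?_⟩
      rw [inv_mul_cancel_left]
    · intro τ hτ
      simp only [mul_inv_cancel_left]
    · rintro ⟨σ, h⟩ hp
      rw [sg_mul]
  have hfactor : Csum f₂ = EV * EH := by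
    rw [csum_eq_sum f₂ (inst := by infer_instance), hEV, hEH, Finset.sum_mul_sum]
    rw [← Finset.sum_product', ← hbij]
    refine Finset.sum_congr rfl fun p _ => ?_
    rw [MonoidAlgebra.single_mul_single]
  have hHsub : Hs ⊆ CDf := fun σ hσ => (memCDf σ).2 ((memHs σ).1 hσ).1
  -- Garnir vanishing for each g in CDf \ Hs
  have hGarnir : ∀ g ∈ CDf \ Hs,
      Csum f₂ * MonoidAlgebra.single g (1 : ℂ) * Rsum fr = 0 := by
    intro g hg
    rw [Finset.mem_sdiff, memCDf, memHs] at hg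
    have hg2 : ¬ ∀ b, f₂ (g b) = f₂ b := fun h => hg.2 ⟨hg.1, h⟩
    obtain ⟨z₁, z₂, hrow, hne, hψeq⟩ := hG g hg.1 hg2
    exact garnir f₂ fr g z₁ z₂ hrow hne hψeq
  -- closure of CDf \ Hs under left mult by Hs
  have hclosed : ∀ h ∈ Hs, ∀ g : Equiv.Perm α, g ∈ CDf \ Hs ↔ h * g ∈ CDf \ Hs := by
    intro h hh g
    obtain ⟨h1, h2⟩ := (memHs h).1 hh
    rw [Finset.mem_sdiff, Finset.mem_sdiff, memCDf, memCDf, memHs, memHs]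
    constructor
    · rintro ⟨hg1, hg2⟩
      refine ⟨pres_mul h1 hg1, fun hcon => hg2 ⟨?_, ?_⟩⟩
      · have := pres_mul (pres_inv h1) hcon.1
        rwa [inv_mul_cancel_left] at this
      · have := pres_mul (pres_inv h2) hcon.2
        rwa [inv_mul_cancel_left] at this
    · rintro ⟨hg1, hg2⟩
      have hga : ∀ b, f₁ (g b) = f₁ b := by
        have := pres_mul (pres_inv h1) hg1
        rwa [inv_mul_cancel_left] at this
      exact ⟨hga, fun hcon => hg2 ⟨pres_mul h1 hcon.1, pres_mul h2 hcon.2⟩⟩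
  -- single h 1 * S = sg h • S
  have hsingleS : ∀ h ∈ Hs, MonoidAlgebra.single h (1 : ℂ) * S = sg h • S := by
    intro h hh
    rw [hS, Finset.mul_sum, Finset.smul_sum]
    refine Finset.sum_equiv (Equiv.mulLeft h) (fun g => hclosed h hh g) (fun g hg => ?_)
    rw [MonoidAlgebra.single_mul_single, one_mul, Equiv.coe_mulLeft,
      MonoidAlgebra.smul_single']
    congr 1
    rw [sg_mul, ← mul_assoc, sg_mul_self, one_mul]
  -- EH * (S * R) = card • (S * R)
  have hEHX : EH * (S * Rsum fr) = (Hs.card : ℂ) • (S * Rsum fr) := by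
    rw [hEH, Finset.sum_mul]
    have hterm : ∀ h ∈ Hs,
        MonoidAlgebra.single h (sg h) * (S * Rsum fr) = S * Rsum fr := by
      intro h hh
      have h1 : MonoidAlgebra.single h (sg h) = sg h • MonoidAlgebra.single h (1 : ℂ) := by
        rw [MonoidAlgebra.smul_single', mul_one]
      rw [h1, smul_mul_assoc, ← mul_assoc, hsingleS h hh, smul_mul_assoc, smul_smul,
        sg_mul_self, one_smul]
    rw [Finset.sum_congr rfl hterm, Finset.sum_const, ← Nat.cast_smul_eq_nsmul ℂ]
  -- Csum f₂ * (S * R) = 0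
  have hCX : Csum f₂ * (S * Rsum fr) = 0 := by
    rw [← mul_assoc, hS, Finset.mul_sum, Finset.sum_mul]
    refine Finset.sum_eq_zero fun g hg => ?_
    have h1 : MonoidAlgebra.single g (sg g) = sg g • MonoidAlgebra.single g (1 : ℂ) := by
      rw [MonoidAlgebra.smul_single', mul_one]
    rw [h1, mul_smul_comm, smul_mul_assoc, hGarnir g hg, smul_zero]
  -- EV * (S * R) = 0
  have hEVX : EV * (S * Rsum fr) = 0 := by
    have h1 : (Hs.card : ℂ) • (EV * (S * Rsum fr)) = 0 := by
      rw [← mul_smul_comm, ← hEHX, ← mul_assoc, ← hfactor, hCX]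
    have hone : (1 : Equiv.Perm α) ∈ Hs :=
      (memHs 1).2 ⟨fun b => by simp, fun b => by simp⟩
    have h2 : (Hs.card : ℂ) ≠ 0 :=
      Nat.cast_ne_zero.2 (Finset.card_ne_zero_of_mem hone)
    rcases smul_eq_zero.mp h1 with h | h
    · exact absurd h h2
    · exact h
  -- split Csum f₁
  have hsplit : S + EH = Csum f₁ := by
    rw [csum_eq_sum f₁ (inst := by infer_instance), hS, hEH]
    exact Finset.sum_sdiff hHsub
  calc Csum f₂ * Rsum fr = (EV * EH) * Rsum fr := by rw [← hfactor]
    _ = EV * (EH * Rsum fr) := by rw [mul_assoc]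
    _ = EV * (EH * Rsum fr) + EV * (S * Rsum fr) := by rw [hEVX, add_zero]
    _ = EV * ((S + EH) * Rsum fr) := by
        rw [add_mul, mul_add]
        rw [add_comm]
    _ = EV * (Csum f₁ * Rsum fr) := by rw [hsplit]


lemma mem_row {D : Dg} {p q : ℕ} : q ∈ row D p ↔ (p, q) ∈ D := by
  simp only [row, Finset.mem_image, Finset.mem_filter]
  constructor
  · rintro ⟨b, ⟨hb, rfl⟩, rfl⟩; rwa [Prod.mk.eta]
  · intro h; exact ⟨(p, q), ⟨h, rfl⟩, rfl⟩

lemma lRow_le {D : Dg} {p q : ℕ} (h : q ∈ row D p) : lRow D p ≤ (q : ℕ∞) :=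
  Finset.inf_le h

lemma le_rRow {D : Dg} {p q : ℕ} (h : q ∈ row D p) : q ≤ rRow D p :=
  Finset.le_sup (f := id) h

lemma rRow_mem {D : Dg} {p : ℕ} (h : (row D p).Nonempty) : rRow D p ∈ row D p := by
  have h1 : rRow D p = (row D p).max' h := by
    refine le_antisymm (Finset.sup_le fun b hb => Finset.le_max' _ _ hb) ?_
    exact Finset.le_sup (f := id) ((row D p).max'_mem h)
  rw [h1]; exact (row D p).max'_mem h

lemma exists_lRow {D : Dg} {p : ℕ} (h : (row D p).Nonempty) :
    ∃ lp : ℕ, lRow D p = (lp : ℕ∞) ∧ lp ∈ row D p := by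
  refine ⟨(row D p).min' h, ?_, (row D p).min'_mem h⟩
  refine le_antisymm (Finset.inf_le ((row D p).min'_mem h)) ?_
  exact Finset.le_inf fun q hq => Nat.cast_le.2 (Finset.min'_le _ _ hq)

lemma lRow_empty {D : Dg} {p : ℕ} (h : row D p = ∅) : lRow D p = ⊤ := by
  rw [lRow, h, Finset.inf_empty]

lemma row_nonempty_of_lRow_lt {D : Dg} {p : ℕ} {x : ℕ∞} (h : lRow D p < x) :
    (row D p).Nonempty := by
  rcases Finset.eq_empty_or_nonempty (row D p) with he | hne
  · rw [lRow_empty he] at h; exact absurd h (by simp)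
  · exact hne

lemma lmono {D : Dg} {i : ℕ} (hi : 2 ≤ i) (hmax : ∀ i', Violation D i' → i' ≤ i) :
    ∀ p, i ≤ p → lRow D i ≤ lRow D p := by
  intro p hp
  induction p, hp using Nat.le_induction with
  | base => exact le_refl _
  | succ p hp ih =>
    have h1 : ¬ Violation D (p + 1) := fun hv => by have := hmax _ hv; omega
    have h2 : ¬ lRow D (p + 1) < lRow D p := fun hlt => h1 ⟨by omega, by simpa using hlt⟩
    exact ih.trans (not_lt.mp h2)

lemma key_pair (D : Dg) (k i : ℕ)
    (hrows : ∀ p, (row D p).Nonempty ↔ 1 ≤ p ∧ p ≤ k)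
    (hconv : RowConvex D)
    (hrdec : ∀ p q, 1 ≤ p → p ≤ q → q ≤ k → rRow D q ≤ rRow D p)
    (hviol : Violation D i)
    (hmax : ∀ i', Violation D i' → i' ≤ i)
    (hr : rRow D i ≤ rRow D (i - 1) - 1)
    (fψ : {x : ℕ × ℕ // x ∈ D} → ℕ)
    (hfψ : ∀ b, fψ b = if i ≤ b.val.1 ∧ lRow D b.val.1 = lRow D i ∧ (b.val.2 : ℕ∞) = lRow D b.val.1
      then rRow D b.val.1 + 1 else b.val.2)
    (g : Equiv.Perm {x : ℕ × ℕ // x ∈ D}) (hgcol : ∀ b, (g b).val.2 = b.val.2)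
    (hgbad : ¬ ∀ b, fψ (g b) = fψ b) :
    ∃ z₁ z₂ : {x : ℕ × ℕ // x ∈ D}, z₁.val.1 = z₂.val.1 ∧ z₁ ≠ z₂ ∧ fψ (g z₁) = fψ (g z₂) := by
  classical
  have hval : ∀ b : {x : ℕ × ℕ // x ∈ D}, b.val.2 ∈ row D b.val.1 := fun b =>
    mem_row.2 (by rw [Prod.mk.eta]; exact b.2)
  have hne : ∀ b : {x : ℕ × ℕ // x ∈ D}, (row D b.val.1).Nonempty := fun b => ⟨_, hval b⟩
  have hbounds : ∀ b : {x : ℕ × ℕ // x ∈ D}, 1 ≤ b.val.1 ∧ b.val.1 ≤ k := fun b => (hrows _).1 (hne b)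
  have hi2 : 2 ≤ i := hviol.1
  have hrowi : (row D i).Nonempty := row_nonempty_of_lRow_lt hviol.2
  obtain ⟨hi1, hik⟩ := (hrows i).1 hrowi
  obtain ⟨li, hli, hlimem⟩ := exists_lRow hrowi
  have hrowi1 : (row D (i - 1)).Nonempty := (hrows _).2 ⟨by omega, by omega⟩
  obtain ⟨l1, hl1, hl1mem⟩ := exists_lRow hrowi1
  have hlil1 : li < l1 := by
    have := hviol.2; rw [hli, hl1] at this; exact_mod_cast this
  have hl1r : l1 ≤ rRow D (i - 1) := le_rRow hl1mem
  have hri1 : rRow D i + 1 ≤ rRow D (i - 1) := by omega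
  set Mv : {x : ℕ × ℕ // x ∈ D} → Prop := fun b =>
    i ≤ b.val.1 ∧ lRow D b.val.1 = lRow D i ∧ (b.val.2 : ℕ∞) = lRow D b.val.1 with hMv
  have hfM : ∀ b : {x : ℕ × ℕ // x ∈ D}, Mv b → fψ b = rRow D b.val.1 + 1 := fun b h => by
    rw [hfψ]; exact if_pos h
  have hfN : ∀ b : {x : ℕ × ℕ // x ∈ D}, ¬ Mv b → fψ b = b.val.2 := fun b h => by
    rw [hfψ]; exact if_neg h
  have moved_col : ∀ b : {x : ℕ × ℕ // x ∈ D}, Mv b → b.val.2 = li := by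
    intro b h
    have : (b.val.2 : ℕ∞) = (li : ℕ∞) := by rw [h.2.2, h.2.1, hli]
    exact_mod_cast this
  have not_moved_lt : ∀ b : {x : ℕ × ℕ // x ∈ D}, b.val.2 = li → ¬ Mv b → b.val.1 < i := by
    intro b hcol hnm
    by_contra hge
    push_neg at hge
    have h1 : lRow D i ≤ lRow D b.val.1 := lmono hi2 hmax _ hge
    have h2 : lRow D b.val.1 ≤ (b.val.2 : ℕ∞) := lRow_le (hval b)
    have h3 : lRow D b.val.1 = lRow D i := by
      refine le_antisymm ?_ h1
      rw [hcol] at h2; rw [hli]; exact h2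
    exact hnm ⟨hge, h3, by rw [h3, hli, hcol]⟩
  -- main claim
  have main : ∃ y : {x : ℕ × ℕ // x ∈ D}, y.val.2 = li ∧ li < fψ (g y) ∧ fψ (g y) ≤ rRow D y.val.1 := by
    by_contra hno
    push_neg at hno
    have gcol_li : ∀ b : {x : ℕ × ℕ // x ∈ D}, b.val.2 = li → (g b).val.2 = li := fun b h => by
      rw [hgcol]; exact h
    have gval_moved : ∀ b : {x : ℕ × ℕ // x ∈ D}, b.val.2 = li → Mv (g b) →
        fψ (g b) = rRow D (g b).val.1 + 1 ∧ li < fψ (g b) := by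
      intro b hcol hm
      have h1 := hfM _ hm
      have h2 : li ≤ rRow D (g b).val.1 := by
        have := le_rRow (hval (g b)); rwa [gcol_li b hcol] at this
      exact ⟨h1, by omega⟩
    have stepI : ∀ b : {x : ℕ × ℕ // x ∈ D}, b.val.2 = li → ¬ Mv b → ¬ Mv (g b) := by
      intro b hcol hnm hmv
      obtain ⟨h1, h2⟩ := gval_moved b hcol hmv
      have hb1 : b.val.1 < i := not_moved_lt b hcol hnm
      have hp'k : (g b).val.1 ≤ k := (hbounds _).2
      have hr1 : rRow D (g b).val.1 ≤ rRow D i := hrdec i _ hi1 hmv.1 hp'k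
      have hr2 : rRow D (i - 1) ≤ rRow D b.val.1 :=
        hrdec b.val.1 (i - 1) (hbounds b).1 (by omega) (by omega)
      have := hno b hcol (by omega)
      omega
    set U : Finset {x : ℕ × ℕ // x ∈ D} := Finset.univ.filter (fun b => b.val.2 = li ∧ ¬ Mv b) with hU
    set M : Finset {x : ℕ × ℕ // x ∈ D} := Finset.univ.filter (fun b => Mv b) with hM
    have hUmap : ∀ b ∈ U, g b ∈ U := by
      intro b hb
      rw [hU, Finset.mem_filter] at hb ⊢
      exact ⟨Finset.mem_univ _, gcol_li b hb.2.1, stepI b hb.2.1 hb.2.2⟩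
    have hUim : U.image g = U := by
      refine Finset.eq_of_subset_of_card_le ?_ ?_
      · intro x hx
        obtain ⟨b, hb, rfl⟩ := Finset.mem_image.1 hx
        exact hUmap b hb
      · rw [Finset.card_image_of_injective _ g.injective]
    have stepII : ∀ b ∈ M, g b ∈ M := by
      intro b hb
      rw [hM, Finset.mem_filter] at hb ⊢
      refine ⟨Finset.mem_univ _, ?_⟩
      by_contra hnm
      have hgb : g b ∈ U := by
        rw [hU, Finset.mem_filter]
        exact ⟨Finset.mem_univ _, gcol_li b (moved_col b hb.2), hnm⟩
      rw [← hUim, Finset.mem_image] at hgb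
      obtain ⟨u, hu, hub⟩ := hgb
      have : u = b := g.injective hub
      subst this
      rw [hU, Finset.mem_filter] at hu
      exact hu.2.2 hb.2
    have hMim : M.image g = M := by
      refine Finset.eq_of_subset_of_card_le ?_ ?_
      · intro x hx
        obtain ⟨b, hb, rfl⟩ := Finset.mem_image.1 hx
        exact stepII b hb
      · rw [Finset.card_image_of_injective _ g.injective]
    have pointwise : ∀ b ∈ M, rRow D b.val.1 + 1 ≤ rRow D (g b).val.1 + 1 := by
      intro b hb
      rw [hM, Finset.mem_filter] at hb
      have hcol := moved_col b hb.2
      have hgm : Mv (g b) := by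
        have := stepII b (by rw [hM, Finset.mem_filter]; exact ⟨Finset.mem_univ _, hb.2⟩)
        rw [hM, Finset.mem_filter] at this; exact this.2
      obtain ⟨h1, h2⟩ := gval_moved b hcol hgm
      have := hno b hcol h2
      omega
    have hsum : ∑ b ∈ M, (rRow D b.val.1 + 1) = ∑ b ∈ M, (rRow D (g b).val.1 + 1) := by
      conv_lhs => rw [← hMim]
      rw [Finset.sum_image (fun x _ y _ h => g.injective h)]
    have eqpoint : ∀ b ∈ M, rRow D b.val.1 + 1 = rRow D (g b).val.1 + 1 :=
      (Finset.sum_eq_sum_iff_of_le pointwise).1 hsum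
    refine hgbad (fun b => ?_)
    by_cases hbl : b.val.2 = li
    · by_cases hm : Mv b
      · have hbM : b ∈ M := by rw [hM, Finset.mem_filter]; exact ⟨Finset.mem_univ _, hm⟩
        have hgm : Mv (g b) := by
          have := stepII b hbM; rw [hM, Finset.mem_filter] at this; exact this.2
        rw [hfM _ hgm, hfM _ hm]
        have := eqpoint b hbM; omega
      · have hgm := stepI b hbl hm
        rw [hfN _ hgm, hfN _ hm, hgcol]
    · have hm : ¬ Mv b := fun h => hbl (moved_col b h)
      have hgm : ¬ Mv (g b) := fun h => by
        have := moved_col _ h; rw [hgcol] at this; exact hbl this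
      rw [hfN _ hgm, hfN _ hm, hgcol]
  obtain ⟨y, hycol, hylt, hyle⟩ := main
  set c₀ := fψ (g y) with hc₀
  have hyD : (y.val.1, li) ∈ D := by
    rw [← hycol, Prod.mk.eta]; exact y.2
  have hrD : (y.val.1, rRow D y.val.1) ∈ D := mem_row.1 (rRow_mem (hne y))
  have hz₂D : (y.val.1, c₀) ∈ D := hconv _ li (rRow D y.val.1) c₀ hyD hrD (by omega) hyle
  refine ⟨y, ⟨(y.val.1, c₀), hz₂D⟩, rfl, ?_, ?_⟩
  · intro h
    have := congrArg (fun z : {x : ℕ × ℕ // x ∈ D} => z.val.2) h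
    simp only at this
    rw [hycol] at this
    omega
  · have hgm : ¬ Mv (g ⟨(y.val.1, c₀), hz₂D⟩) := by
      intro h
      have := moved_col _ h
      rw [hgcol] at this
      simp only at this
      omega
    rw [hfN _ hgm, hgcol]


end St15

/-- With `D`, `i`, `D^B`, `ψ` as above and `V` a set of left coset
representatives of `C_D ∩ C_{D^B}` in `C_{D^B}`,
`C(D^B)·R(D^B) = (Σ_{σ ∈ V} sgn(σ)·σ) · C(D)·R(D)` in `ℂ[Σ_D]`; consequently
`V^{D^B} ⊆ V^D`. -/
theorem statement15 (D DB : Dg) (k i : ℕ) (hAS : AlmostSkew D k)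
    (hmax : MaxViolation D i) (hperm : StepBOk D i) (hstep : IsStepB D DB i)
    (ψ : {x : ℕ × ℕ // x ∈ D} ≃ {x : ℕ × ℕ // x ∈ DB})
    (hψ : ∀ b : {x : ℕ × ℕ // x ∈ D},
      (ψ b).val =
        if i ≤ b.val.1 ∧ lRow D b.val.1 = lRow D i ∧ (b.val.2 : ℕ∞) = lRow D b.val.1
        then (b.val.1, rRow D b.val.1 + 1) else b.val)
    (V : Finset (Equiv.Perm {x : ℕ × ℕ // x ∈ D}))
    (hV1 : ∀ σ ∈ V, ∀ b, (ψ (σ b)).val.2 = (ψ b).val.2)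
    (hV2 : ∀ τ : Equiv.Perm {x : ℕ × ℕ // x ∈ D}, (∀ b, (ψ (τ b)).val.2 = (ψ b).val.2) →
      ∃! σ, σ ∈ V ∧ (∀ b, ((σ⁻¹ * τ) b).val.2 = b.val.2) ∧
        (∀ b, (ψ ((σ⁻¹ * τ) b)).val.2 = (ψ b).val.2))
    :
    (Csum (fun b : {x : ℕ × ℕ // x ∈ D} => (ψ b).val.2) *
        Rsum (fun b : {x : ℕ × ℕ // x ∈ D} => (ψ b).val.1) =
      (∑ σ ∈ V, MonoidAlgebra.single σ ((Equiv.Perm.sign σ : ℤ) : ℂ)) *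
        (Csum (fun b : {x : ℕ × ℕ // x ∈ D} => b.val.2) *
          Rsum (fun b : {x : ℕ × ℕ // x ∈ D} => b.val.1))) ∧
    Submodule.span (MonoidAlgebra ℂ (Equiv.Perm {x : ℕ × ℕ // x ∈ D}))
        {Csum (fun b : {x : ℕ × ℕ // x ∈ D} => (ψ b).val.2) *
          Rsum (fun b : {x : ℕ × ℕ // x ∈ D} => (ψ b).val.1)} ≤
      Submodule.span (MonoidAlgebra ℂ (Equiv.Perm {x : ℕ × ℕ // x ∈ D}))
        {Csum (fun b : {x : ℕ × ℕ // x ∈ D} => b.val.2) *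
          Rsum (fun b : {x : ℕ × ℕ // x ∈ D} => b.val.1)} := by
  classical
  obtain ⟨hrows, hconv, hrdec, -⟩ := hAS
  obtain ⟨hviol, hmaxle⟩ := hmax
  obtain ⟨-, hrB⟩ := hperm
  have hfrow : (fun b : {x : ℕ × ℕ // x ∈ D} => (ψ b).val.1) = fun b => b.val.1 := by
    funext b
    rw [hψ b, apply_ite Prod.fst]
    split_ifs <;> rfl
  rw [hfrow]
  have hfψeq : ∀ b : {x : ℕ × ℕ // x ∈ D}, (ψ b).val.2 =
      if i ≤ b.val.1 ∧ lRow D b.val.1 = lRow D i ∧ (b.val.2 : ℕ∞) = lRow D b.val.1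
      then rRow D b.val.1 + 1 else b.val.2 := fun b => by
    rw [hψ b, apply_ite Prod.snd]
  have hG : ∀ g : Equiv.Perm {x : ℕ × ℕ // x ∈ D},
      (∀ b, (fun b : {x : ℕ × ℕ // x ∈ D} => b.val.2) (g b)
        = (fun b : {x : ℕ × ℕ // x ∈ D} => b.val.2) b) →
      ¬(∀ b, (fun b : {x : ℕ × ℕ // x ∈ D} => (ψ b).val.2) (g b)
        = (fun b : {x : ℕ × ℕ // x ∈ D} => (ψ b).val.2) b) →
      ∃ z₁ z₂ : {x : ℕ × ℕ // x ∈ D},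
        (fun b : {x : ℕ × ℕ // x ∈ D} => b.val.1) z₁
          = (fun b : {x : ℕ × ℕ // x ∈ D} => b.val.1) z₂ ∧ z₁ ≠ z₂ ∧
        (fun b : {x : ℕ × ℕ // x ∈ D} => (ψ b).val.2) (g z₁)
          = (fun b : {x : ℕ × ℕ // x ∈ D} => (ψ b).val.2) (g z₂) :=
    fun g hg hbad =>
      St15.key_pair D k i hrows hconv hrdec hviol hmaxle hrB _ hfψeq g hg hbad
  have hmain := St15.main_identity (fun b : {x : ℕ × ℕ // x ∈ D} => b.val.2)
    (fun b => (ψ b).val.2) (fun b => b.val.1) V hV1 hV2 hG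
  refine ⟨hmain, ?_⟩
  rw [hmain, Submodule.span_le]
  rintro x hx
  simp only [Set.mem_singleton_iff] at hx
  subst hx
  rw [← smul_eq_mul]
  exact Submodule.smul_mem _ _ (Submodule.subset_span rfl)
end

section
/- Let D be an almost skew diagram, let i be the maximum index with l_{i−1} > l_i, and suppose both Step A and Step B are permitted at row i. Let D^A (with column-preserving bijection φ) and D^B (with row-preserving bijection ψ) be the results of the two steps, all associated elements regarded in ℂ[Σ_D]. Then C(D^B)·σ·R(D^A) = 0 for every σ ∈ R_D; consequently, for any set Y of right coset representatives of R_D ∩ R_{D^A} in R_{D^A}, C(D^B)·R(D^B)·(Σ_{σ ∈ Y} σ) = 0, i.e., the Specht module V^{D^B} lies in the kernel of the module homomorphism T : V^D → V^{D^A} given by right multiplication by Σ_{σ ∈ Y} σ. -/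
open scoped Classical

open scoped ENat

/-!
The boxes that Step A puts into row `i - 1` occupy every column from `l_i` to `r_{i-1}`, so there
are at least `r_{i-1} - l_i + 1` of them. A row-preserving `σ` keeps them in rows `i - 1` and `i`,
where after Step B only the `r_{i-1} - l_i` columns `l_i + 1, …, r_{i-1}` are occupied: Step B moves
the box in column `l_i` to column `r_i + 1 ≤ r_{i-1}`. By pigeonhole two of them, `u ≠ v`, have
`σ u` and `σ v` in one column of `D^B`, and then `(σ u σ v) · σ · (u v) = σ` forces
`C(D^B) · σ · R(D^A) = -C(D^B) · σ · R(D^A)`. For the second claim, `R(D^A) = (Σ_{h ∈ H} h) · Σ_Y`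
with `H = R_D ∩ R_{D^A}`, and `R(D) · Σ_{h ∈ H} h = |H| · R(D)`.
-/

open Finset MonoidAlgebra Equiv

section GroupAlgebra

variable {α : Type} [Fintype α] [DecidableEq α]

def permsPreserving (g : α → ℕ) : Finset (Perm α) :=
  univ.filter (fun σ : Perm α => ∀ b, g (σ b) = g b)

variable {g : α → ℕ} {σ τ : Perm α}

@[simp]
lemma mem_permsPreserving : σ ∈ permsPreserving g ↔ ∀ b, g (σ b) = g b := by
  simp [permsPreserving]

lemma mul_mem_permsPreserving (hσ : σ ∈ permsPreserving g) (hτ : τ ∈ permsPreserving g) :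
    σ * τ ∈ permsPreserving g := by
  rw [mem_permsPreserving] at *
  intro b
  rw [Perm.mul_apply, hσ, hτ]

lemma inv_mem_permsPreserving (hσ : σ ∈ permsPreserving g) : σ⁻¹ ∈ permsPreserving g := by
  rw [mem_permsPreserving] at *
  intro b
  rw [← hσ (σ⁻¹ b), ← Perm.mul_apply, mul_inv_cancel, Perm.one_apply]

lemma swap_mem_permsPreserving {u v : α} (h : g u = g v) : swap u v ∈ permsPreserving g := by
  rw [mem_permsPreserving]
  intro b
  rcases eq_or_ne b u with rfl | hu
  · rw [swap_apply_left, h]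
  rcases eq_or_ne b v with rfl | hv
  · rw [swap_apply_right, h]
  · rw [swap_apply_of_ne_of_ne hu hv]

lemma Rsum_eq_sum (g : α → ℕ) : Rsum g = ∑ σ ∈ permsPreserving g, single σ (1 : ℂ) := rfl

lemma Csum_eq_sum (g : α → ℕ) :
    Csum g = ∑ σ ∈ permsPreserving g, single σ ((Perm.sign σ : ℤ) : ℂ) := rfl

lemma single_mul_Rsum (hτ : τ ∈ permsPreserving g) : single τ (1 : ℂ) * Rsum g = Rsum g := by
  rw [Rsum_eq_sum, mul_sum]
  refine sum_nbij' (τ * ·) (τ⁻¹ * ·) (fun a ha => mul_mem_permsPreserving hτ ha)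
    (fun a ha => mul_mem_permsPreserving (inv_mem_permsPreserving hτ) ha)
    (fun a _ => inv_mul_cancel_left τ a) (fun a _ => mul_inv_cancel_left τ a) ?_
  intro a _
  rw [single_mul_single, mul_one]

lemma Rsum_mul_single (hτ : τ ∈ permsPreserving g) : Rsum g * single τ (1 : ℂ) = Rsum g := by
  rw [Rsum_eq_sum, sum_mul]
  refine sum_nbij' (· * τ) (· * τ⁻¹) (fun a ha => mul_mem_permsPreserving ha hτ)
    (fun a ha => mul_mem_permsPreserving ha (inv_mem_permsPreserving hτ))
    (fun a _ => mul_inv_cancel_right a τ) (fun a _ => inv_mul_cancel_right a τ) ?_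
  intro a _
  rw [single_mul_single, mul_one]

lemma Csum_mul_single (hτ : τ ∈ permsPreserving g) :
    Csum g * single τ (1 : ℂ) = ((Perm.sign τ : ℤ) : ℂ) • Csum g := by
  rw [Csum_eq_sum, sum_mul, smul_sum]
  refine sum_nbij' (· * τ) (· * τ⁻¹) (fun a ha => mul_mem_permsPreserving ha hτ)
    (fun a ha => mul_mem_permsPreserving ha (inv_mem_permsPreserving hτ))
    (fun a _ => mul_inv_cancel_right a τ) (fun a _ => inv_mul_cancel_right a τ) ?_
  intro a _
  have hsq : ((Perm.sign τ : ℤ) : ℂ) * ((Perm.sign τ : ℤ) : ℂ) = 1 := by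
    rw [← Int.cast_mul, ← Units.val_mul, Int.units_mul_self, Units.val_one, Int.cast_one]
  rw [single_mul_single, smul_single, smul_eq_mul, Perm.sign_mul, Units.val_mul, Int.cast_mul,
    mul_one, mul_left_comm, hsq, mul_one]

lemma Csum_mul_single_mul_Rsum_eq_zero {c r : α → ℕ} {u v : α} (huv : u ≠ v)
    (hc : c (σ u) = c (σ v)) (hr : r u = r v) :
    Csum c * single σ (1 : ℂ) * Rsum r = 0 := by
  have hconj : swap (σ u) (σ v) * σ * swap u v = σ := by
    rw [swap_apply_apply, inv_mul_cancel_right, mul_assoc, swap_mul_self, mul_one]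
  have hneg : Csum c * single σ (1 : ℂ) * Rsum r = -(Csum c * single σ (1 : ℂ) * Rsum r) :=
    calc Csum c * single σ (1 : ℂ) * Rsum r
        = Csum c * single (swap (σ u) (σ v) * σ * swap u v) 1 * Rsum r := by rw [hconj]
      _ = Csum c * single (swap (σ u) (σ v)) 1 * single σ 1 *
            (single (swap u v) 1 * Rsum r) := by
          conv_rhs => rw [← mul_assoc, mul_assoc (Csum c), single_mul_single, mul_assoc (Csum c),
            single_mul_single, mul_one, mul_one]
      _ = -(Csum c * single σ (1 : ℂ) * Rsum r) := by
          rw [Csum_mul_single (swap_mem_permsPreserving hc),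
            Perm.sign_swap (σ.injective.ne huv), single_mul_Rsum (swap_mem_permsPreserving hr)]
          simp
  have htwo : (2 : ℂ) • (Csum c * single σ (1 : ℂ) * Rsum r) = 0 := by
    rw [two_smul]
    nth_rewrite 1 [hneg]
    exact neg_add_cancel _
  simpa using htwo

variable {r a : α → ℕ} {Y : Finset (Perm α)}

/-- `hY1` and `hY2` say that `Y` is a set of right coset representatives of
`permsPreserving r ∩ permsPreserving a` in `permsPreserving a`. -/
lemma Rsum_eq_sum_mul_sum_of_cosetReps (hY1 : ∀ σ ∈ Y, ∀ b, a (σ b) = a b)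
    (hY2 : ∀ τ : Perm α, (∀ b, a (τ b) = a b) →
      ∃! σ, σ ∈ Y ∧ (∀ b, r ((τ * σ⁻¹) b) = r b) ∧ (∀ b, a ((τ * σ⁻¹) b) = a b)) :
    Rsum a = (∑ h ∈ permsPreserving r ∩ permsPreserving a, single h (1 : ℂ)) *
      ∑ σ ∈ Y, single σ (1 : ℂ) := by
  have hY : ∀ σ ∈ Y, σ ∈ permsPreserving a := fun σ hσ => mem_permsPreserving.2 (hY1 σ hσ)
  have hprod : ∀ x ∈ (permsPreserving r ∩ permsPreserving a) ×ˢ Y,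
      x.1 * x.2 ∈ permsPreserving a := fun x hx => by
    obtain ⟨hh, hy⟩ := mem_product.1 hx
    exact mul_mem_permsPreserving (mem_inter.1 hh).2 (hY _ hy)
  have hrep : ∀ x ∈ (permsPreserving r ∩ permsPreserving a) ×ˢ Y,
      x.2 ∈ Y ∧ (∀ b, r ((x.1 * x.2 * x.2⁻¹) b) = r b) ∧
        ∀ b, a ((x.1 * x.2 * x.2⁻¹) b) = a b := fun x hx => by
    obtain ⟨hh, hy⟩ := mem_product.1 hx
    rw [mul_inv_cancel_right]
    exact ⟨hy, mem_permsPreserving.1 (mem_inter.1 hh).1, mem_permsPreserving.1 (mem_inter.1 hh).2⟩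
  rw [Rsum_eq_sum, sum_mul_sum, ← sum_product']
  simp only [single_mul_single, one_mul]
  refine (sum_nbij (fun x : Perm α × Perm α => x.1 * x.2) hprod ?_ ?_ fun _ _ => rfl).symm
  · intro x hx z hz hxz
    have hτ := mem_permsPreserving.1 (hprod x hx)
    have h2 : x.2 = z.2 := (hY2 _ hτ).unique (hrep x hx) (by rw [show x.1 * x.2 = z.1 * z.2 from hxz]; exact hrep z hz)
    exact Prod.ext (mul_right_cancel (hxz.trans (congrArg _ h2.symm))) h2
  · intro τ hτ
    obtain ⟨σ, ⟨hσY, hr, ha⟩, -⟩ := hY2 τ (mem_permsPreserving.1 hτ)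
    refine ⟨(τ * σ⁻¹, σ), ?_, inv_mul_cancel_right τ σ⟩
    exact mem_product.2 ⟨mem_inter.2 ⟨mem_permsPreserving.2 hr, mem_permsPreserving.2 ha⟩, hσY⟩

lemma mul_Rsum_mul_sum_eq_zero_of_cosetReps (x : MonoidAlgebra ℂ (Perm α))
    (hY1 : ∀ σ ∈ Y, ∀ b, a (σ b) = a b)
    (hY2 : ∀ τ : Perm α, (∀ b, a (τ b) = a b) →
      ∃! σ, σ ∈ Y ∧ (∀ b, r ((τ * σ⁻¹) b) = r b) ∧ (∀ b, a ((τ * σ⁻¹) b) = a b))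
    (hx : ∀ σ : Perm α, (∀ b, r (σ b) = r b) → x * single σ (1 : ℂ) * Rsum a = 0) :
    x * Rsum r * ∑ σ ∈ Y, single σ (1 : ℂ) = 0 := by
  set H := permsPreserving r ∩ permsPreserving a
  have hRH : Rsum r * ∑ h ∈ H, single h (1 : ℂ) = (#H : ℂ) • Rsum r := by
    rw [mul_sum, sum_congr rfl fun h hh => Rsum_mul_single (mem_inter.1 hh).1, sum_const,
      Nat.cast_smul_eq_nsmul]
  have hRa : x * Rsum r * Rsum a = 0 := by
    rw [Rsum_eq_sum r, mul_sum, sum_mul]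
    exact sum_eq_zero fun σ hσ => hx σ (mem_permsPreserving.1 hσ)
  have hH : (#H : ℂ) ≠ 0 := Nat.cast_ne_zero.2 (card_ne_zero_of_mem (s := H) (a := 1) (by simp [H]))
  have hsmul : (#H : ℂ) • (x * Rsum r * ∑ σ ∈ Y, single σ (1 : ℂ)) = 0 :=
    calc (#H : ℂ) • (x * Rsum r * ∑ σ ∈ Y, single σ (1 : ℂ))
        = x * (Rsum r * ∑ h ∈ H, single h (1 : ℂ)) * ∑ σ ∈ Y, single σ (1 : ℂ) := by
          rw [hRH, mul_smul_comm, smul_mul_assoc]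
      _ = x * Rsum r * Rsum a := by
          rw [Rsum_eq_sum_mul_sum_of_cosetReps hY1 hY2, mul_assoc, mul_assoc, mul_assoc]
      _ = 0 := hRa
  exact (smul_eq_zero.1 hsmul).resolve_left hH

end GroupAlgebra

section Rows

variable {D : Dg} {p q : ℕ}

lemma mem_row_iff : q ∈ row D p ↔ (p, q) ∈ D := by
  simp [row]

lemma lRow_le_of_mem (h : (p, q) ∈ D) : lRow D p ≤ q :=
  inf_le (mem_row_iff.2 h)

lemma le_rRow_of_mem (h : (p, q) ∈ D) : q ≤ rRow D p :=
  le_sup (f := id) (mem_row_iff.2 h)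

lemma rRow_mem (h : (row D p).Nonempty) : (p, rRow D p) ∈ D := by
  obtain ⟨m, hm, he⟩ := exists_mem_eq_sup (row D p) h id
  rw [rRow, he]
  exact mem_row_iff.1 hm

lemma lRow_le_rRow (h : (row D p).Nonempty) : lRow D p ≤ rRow D p :=
  lRow_le_of_mem (rRow_mem h)

lemma exists_lRow_eq (h : (row D p).Nonempty) : ∃ m : ℕ, (p, m) ∈ D ∧ lRow D p = m := by
  obtain ⟨m, hm, he⟩ := exists_mem_eq_inf (row D p) h (fun j => (j : ℕ∞))
  exact ⟨m, mem_row_iff.1 hm, he⟩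

lemma RowConvex.mem_of_lRow_le_of_le_rRow (hD : RowConvex D) (h : (row D p).Nonempty)
    (hl : lRow D p ≤ q) (hr : q ≤ rRow D p) : (p, q) ∈ D := by
  obtain ⟨m, hm, he⟩ := exists_lRow_eq h
  rw [he, Nat.cast_le] at hl
  exact hD p m (rRow D p) q hm (rRow_mem h) hl hr

end Rows

section Steps

variable {D DA DB : Dg} {i lI : ℕ}

lemma AlmostSkew.row_nonempty_of_violation {k : ℕ} (hAS : AlmostSkew D k) (hi : Violation D i) :
    (row D i).Nonempty ∧ (row D (i - 1)).Nonempty := by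
  obtain ⟨hi, hlt⟩ := hi
  have hrow : (row D i).Nonempty := by
    refine nonempty_iff_ne_empty.2 fun h => ?_
    rw [lRow, h, inf_empty] at hlt
    exact not_top_lt hlt
  have hik := ((hAS.1 i).1 hrow).2
  exact ⟨hrow, (hAS.1 _).2 ⟨by omega, by omega⟩⟩

lemma StepAOk.lRow_le_rRow_add_one {k : ℕ} (hAS : AlmostSkew D k) (h : StepAOk D i) :
    lRow D (i - 1) ≤ rRow D i + 1 :=
  tsub_le_iff_right.1 <| h.2.resolve_right <|
    nonempty_iff_ne_empty.1 (hAS.row_nonempty_of_violation h.1).2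

lemma StepBOk.rRow_lt {k : ℕ} (hAS : AlmostSkew D k) (h : StepBOk D i) :
    rRow D i < rRow D (i - 1) := by
  have hpos : 0 < rRow D (i - 1) := by
    exact_mod_cast (zero_le.trans_lt h.1.2).trans_le
      (lRow_le_rRow (hAS.row_nonempty_of_violation h.1).2)
  have := h.2
  omega

lemma ne_zero_of_lRow_lt (hlt : lRow D i < lRow D (i - 1)) : i ≠ 0 := by
  rintro rfl
  exact hlt.false

lemma Icc_subset_image_col_of_stepA_row (hD : RowConvex D) (hrow : (row D i).Nonempty)
    (hrow' : (row D (i - 1)).Nonempty) (hlI : lRow D i = lI) (hlt : lRow D i < lRow D (i - 1))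
    (hA : lRow D (i - 1) ≤ rRow D i + 1) (φ : {x : ℕ × ℕ // x ∈ D} ≃ {x : ℕ × ℕ // x ∈ DA})
    (hφ : ∀ b : {x : ℕ × ℕ // x ∈ D},
      (φ b).val = if b.val.1 = i ∧ InL D i b.val.2 then (i - 1, b.val.2) else b.val) :
    Icc lI (rRow D (i - 1)) ⊆
      (univ.filter fun b : {x : ℕ × ℕ // x ∈ D} => (φ b).val.1 = i - 1).image (·.val.2) := by
  have hi := ne_zero_of_lRow_lt hlt
  intro q hq
  rw [mem_Icc] at hq
  have hlq : lRow D i ≤ q := by rw [hlI]; exact_mod_cast hq.1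
  rw [mem_image]
  by_cases hq' : (q : ℕ∞) < lRow D (i - 1)
  · have hqr : (q : ℕ∞) < (rRow D i + 1 : ℕ) := by push_cast; exact hq'.trans_le hA
    have hmem := hD.mem_of_lRow_le_of_le_rRow hrow hlq (Nat.lt_succ_iff.1 (by exact_mod_cast hqr))
    refine ⟨⟨(i, q), hmem⟩, mem_filter.2 ⟨mem_univ _, ?_⟩, rfl⟩
    rw [hφ, if_pos ⟨rfl, hlq, hq'⟩]
  · have hmem := hD.mem_of_lRow_le_of_le_rRow hrow' (not_lt.1 hq') hq.2
    refine ⟨⟨(i - 1, q), hmem⟩, mem_filter.2 ⟨mem_univ _, ?_⟩, rfl⟩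
    rw [hφ, if_neg (by rintro ⟨h, -⟩; simp only at h; omega)]

lemma stepB_col_mem_Icc (hlI : lRow D i = lI) (hlt : lRow D i < lRow D (i - 1))
    (hB : rRow D i < rRow D (i - 1)) (ψ : {x : ℕ × ℕ // x ∈ D} ≃ {x : ℕ × ℕ // x ∈ DB})
    (hψ : ∀ b : {x : ℕ × ℕ // x ∈ D},
      (ψ b).val =
        if i ≤ b.val.1 ∧ lRow D b.val.1 = lRow D i ∧ (b.val.2 : ℕ∞) = lRow D b.val.1
        then (b.val.1, rRow D b.val.1 + 1) else b.val)
    (b : {x : ℕ × ℕ // x ∈ D}) (hb : b.val.1 = i - 1 ∨ b.val.1 = i) :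
    (ψ b).val.2 ∈ Icc (lI + 1) (rRow D (i - 1)) := by
  have hi := ne_zero_of_lRow_lt hlt
  obtain ⟨⟨p, q⟩, hbD⟩ := b
  rw [hψ, mem_Icc]
  dsimp only at hb ⊢
  rcases hb with rfl | rfl
  · rw [if_neg (by rintro ⟨h, -⟩; omega)]
    have hlq : (lI : ℕ∞) < q := hlI ▸ hlt.trans_le (lRow_le_of_mem hbD)
    exact ⟨by exact_mod_cast hlq, le_rRow_of_mem hbD⟩
  · have hlq : lI ≤ q := by exact_mod_cast hlI ▸ lRow_le_of_mem hbD
    have hqr := le_rRow_of_mem hbD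
    split_ifs with hc
    · exact ⟨by omega, by omega⟩
    · have hq : q ≠ lI := by
        rintro rfl
        exact hc ⟨le_rfl, rfl, hlI.symm⟩
      exact ⟨by omega, by omega⟩

lemma exists_ne_stepA_row_eq_stepB_col_eq (hD : RowConvex D) (hrow : (row D i).Nonempty)
    (hrow' : (row D (i - 1)).Nonempty) (hlt : lRow D i < lRow D (i - 1))
    (hA : lRow D (i - 1) ≤ rRow D i + 1) (hB : rRow D i < rRow D (i - 1))
    (φ : {x : ℕ × ℕ // x ∈ D} ≃ {x : ℕ × ℕ // x ∈ DA})
    (hφ : ∀ b : {x : ℕ × ℕ // x ∈ D},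
      (φ b).val = if b.val.1 = i ∧ InL D i b.val.2 then (i - 1, b.val.2) else b.val)
    (ψ : {x : ℕ × ℕ // x ∈ D} ≃ {x : ℕ × ℕ // x ∈ DB})
    (hψ : ∀ b : {x : ℕ × ℕ // x ∈ D},
      (ψ b).val =
        if i ≤ b.val.1 ∧ lRow D b.val.1 = lRow D i ∧ (b.val.2 : ℕ∞) = lRow D b.val.1
        then (b.val.1, rRow D b.val.1 + 1) else b.val)
    (σ : Perm {x : ℕ × ℕ // x ∈ D}) (hσ : ∀ b, (σ b).val.1 = b.val.1) :
    ∃ u v, u ≠ v ∧ (ψ (σ u)).val.2 = (ψ (σ v)).val.2 ∧ (φ u).val.1 = (φ v).val.1 := by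
  obtain ⟨lI, hlI_mem, hlI⟩ := exists_lRow_eq hrow
  set X := univ.filter fun b : {x : ℕ × ℕ // x ∈ D} => (φ b).val.1 = i - 1
  have hcard : #(Icc (lI + 1) (rRow D (i - 1))) < #X :=
    calc #(Icc (lI + 1) (rRow D (i - 1)))
        < #(Icc lI (rRow D (i - 1))) := by
          have := le_rRow_of_mem hlI_mem
          simp only [Nat.card_Icc]
          omega
      _ ≤ #(X.image (·.val.2)) :=
          card_le_card (Icc_subset_image_col_of_stepA_row hD hrow hrow' hlI hlt hA φ hφ)
      _ ≤ #X := card_image_le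
  have hmaps : Set.MapsTo (fun b => (ψ (σ b)).val.2) X (Icc (lI + 1) (rRow D (i - 1))) := by
    intro b hb
    have hrowb : b.val.1 = i - 1 ∨ b.val.1 = i := by
      have hφb := (mem_filter.1 hb).2
      rw [hφ] at hφb
      split_ifs at hφb with h
      exacts [Or.inr h.1, Or.inl hφb]
    exact stepB_col_mem_Icc hlI hlt hB ψ hψ (σ b) (hσ b ▸ hrowb)
  obtain ⟨u, hu, v, hv, huv, hcol⟩ := exists_ne_map_eq_of_card_lt_of_maps_to hcard hmaps
  exact ⟨u, v, huv, hcol, (mem_filter.1 hu).2.trans (mem_filter.1 hv).2.symm⟩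

end Steps

theorem statement16_general (D DA DB : Dg) (k i : ℕ) (hAS : AlmostSkew D k)
    (hpermA : StepAOk D i) (hpermB : StepBOk D i)
    (φ : {x : ℕ × ℕ // x ∈ D} ≃ {x : ℕ × ℕ // x ∈ DA})
    (hφ : ∀ b : {x : ℕ × ℕ // x ∈ D},
      (φ b).val = if b.val.1 = i ∧ InL D i b.val.2 then (i - 1, b.val.2) else b.val)
    (ψ : {x : ℕ × ℕ // x ∈ D} ≃ {x : ℕ × ℕ // x ∈ DB})
    (hψ : ∀ b : {x : ℕ × ℕ // x ∈ D},
      (ψ b).val =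
        if i ≤ b.val.1 ∧ lRow D b.val.1 = lRow D i ∧ (b.val.2 : ℕ∞) = lRow D b.val.1
        then (b.val.1, rRow D b.val.1 + 1) else b.val)
    (Y : Finset (Equiv.Perm {x : ℕ × ℕ // x ∈ D}))
    (hY1 : ∀ σ ∈ Y, ∀ b, (φ (σ b)).val.1 = (φ b).val.1)
    (hY2 : ∀ τ : Equiv.Perm {x : ℕ × ℕ // x ∈ D}, (∀ b, (φ (τ b)).val.1 = (φ b).val.1) →
      ∃! σ, σ ∈ Y ∧ (∀ b, ((τ * σ⁻¹) b).val.1 = b.val.1) ∧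
        (∀ b, (φ ((τ * σ⁻¹) b)).val.1 = (φ b).val.1))
    :
    (∀ σ : Equiv.Perm {x : ℕ × ℕ // x ∈ D}, (∀ b, (σ b).val.1 = b.val.1) →
      Csum (fun b : {x : ℕ × ℕ // x ∈ D} => (ψ b).val.2) * MonoidAlgebra.single σ (1 : ℂ) *
        Rsum (fun b : {x : ℕ × ℕ // x ∈ D} => (φ b).val.1) = 0) ∧
    (Csum (fun b : {x : ℕ × ℕ // x ∈ D} => (ψ b).val.2) *
        Rsum (fun b : {x : ℕ × ℕ // x ∈ D} => (ψ b).val.1) *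
        (∑ σ ∈ Y, MonoidAlgebra.single σ (1 : ℂ)) = 0) ∧
    (∀ v ∈ Submodule.span (MonoidAlgebra ℂ (Equiv.Perm {x : ℕ × ℕ // x ∈ D}))
        {Csum (fun b : {x : ℕ × ℕ // x ∈ D} => (ψ b).val.2) *
          Rsum (fun b : {x : ℕ × ℕ // x ∈ D} => (ψ b).val.1)},
      v * (∑ σ ∈ Y, MonoidAlgebra.single σ (1 : ℂ)) = 0) := by
  obtain ⟨hrow, hrow'⟩ := hAS.row_nonempty_of_violation hpermA.1
  have hψrow : (fun b : {x : ℕ × ℕ // x ∈ D} => (ψ b).val.1) = fun b => b.val.1 := by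
    funext b
    rw [hψ b]
    split_ifs <;> rfl
  have hvanish : ∀ σ : Equiv.Perm {x : ℕ × ℕ // x ∈ D}, (∀ b, (σ b).val.1 = b.val.1) →
      Csum (fun b : {x : ℕ × ℕ // x ∈ D} => (ψ b).val.2) * MonoidAlgebra.single σ (1 : ℂ) *
        Rsum (fun b : {x : ℕ × ℕ // x ∈ D} => (φ b).val.1) = 0 := fun σ hσ => by
    obtain ⟨u, v, huv, hcol, hrowuv⟩ :=
      exists_ne_stepA_row_eq_stepB_col_eq hAS.2.1 hrow hrow' hpermA.1.2
        (hpermA.lRow_le_rRow_add_one hAS) (hpermB.rRow_lt hAS) φ hφ ψ hψ σ hσ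
    exact Csum_mul_single_mul_Rsum_eq_zero huv hcol hrowuv
  have hker : Csum (fun b : {x : ℕ × ℕ // x ∈ D} => (ψ b).val.2) *
      Rsum (fun b : {x : ℕ × ℕ // x ∈ D} => (ψ b).val.1) *
      (∑ σ ∈ Y, MonoidAlgebra.single σ (1 : ℂ)) = 0 := by
    rw [hψrow]
    exact mul_Rsum_mul_sum_eq_zero_of_cosetReps _ hY1 hY2 hvanish
  refine ⟨hvanish, hker, fun v hv => ?_⟩
  obtain ⟨a, rfl⟩ := Submodule.mem_span_singleton.1 hv
  rw [smul_eq_mul, mul_assoc, hker, mul_zero]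

/-- With both Step A and Step B permitted at row `i`,
`C(D^B) · σ · R(D^A) = 0` for every `σ ∈ R_D`; consequently
`C(D^B)·R(D^B)·(Σ_{σ ∈ Y} σ) = 0`, i.e. `V^{D^B}` lies in the kernel of
`T : V^D → V^{D^A}`. -/
theorem statement16 (D DA DB : Dg) (k i : ℕ) (hAS : AlmostSkew D k)
    (hmax : MaxViolation D i) (hpermA : StepAOk D i) (hpermB : StepBOk D i)
    (hstepA : IsStepA D DA i) (hstepB : IsStepB D DB i)
    (φ : {x : ℕ × ℕ // x ∈ D} ≃ {x : ℕ × ℕ // x ∈ DA})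
    (hφ : ∀ b : {x : ℕ × ℕ // x ∈ D},
      (φ b).val = if b.val.1 = i ∧ InL D i b.val.2 then (i - 1, b.val.2) else b.val)
    (ψ : {x : ℕ × ℕ // x ∈ D} ≃ {x : ℕ × ℕ // x ∈ DB})
    (hψ : ∀ b : {x : ℕ × ℕ // x ∈ D},
      (ψ b).val =
        if i ≤ b.val.1 ∧ lRow D b.val.1 = lRow D i ∧ (b.val.2 : ℕ∞) = lRow D b.val.1
        then (b.val.1, rRow D b.val.1 + 1) else b.val)
    (Y : Finset (Equiv.Perm {x : ℕ × ℕ // x ∈ D}))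
    (hY1 : ∀ σ ∈ Y, ∀ b, (φ (σ b)).val.1 = (φ b).val.1)
    (hY2 : ∀ τ : Equiv.Perm {x : ℕ × ℕ // x ∈ D}, (∀ b, (φ (τ b)).val.1 = (φ b).val.1) →
      ∃! σ, σ ∈ Y ∧ (∀ b, ((τ * σ⁻¹) b).val.1 = b.val.1) ∧
        (∀ b, (φ ((τ * σ⁻¹) b)).val.1 = (φ b).val.1))
    :
    (∀ σ : Equiv.Perm {x : ℕ × ℕ // x ∈ D}, (∀ b, (σ b).val.1 = b.val.1) →
      Csum (fun b : {x : ℕ × ℕ // x ∈ D} => (ψ b).val.2) * MonoidAlgebra.single σ (1 : ℂ) *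
        Rsum (fun b : {x : ℕ × ℕ // x ∈ D} => (φ b).val.1) = 0) ∧
    (Csum (fun b : {x : ℕ × ℕ // x ∈ D} => (ψ b).val.2) *
        Rsum (fun b : {x : ℕ × ℕ // x ∈ D} => (ψ b).val.1) *
        (∑ σ ∈ Y, MonoidAlgebra.single σ (1 : ℂ)) = 0) ∧
    (∀ v ∈ Submodule.span (MonoidAlgebra ℂ (Equiv.Perm {x : ℕ × ℕ // x ∈ D}))
        {Csum (fun b : {x : ℕ × ℕ // x ∈ D} => (ψ b).val.2) *
          Rsum (fun b : {x : ℕ × ℕ // x ∈ D} => (ψ b).val.1)},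
      v * (∑ σ ∈ Y, MonoidAlgebra.single σ (1 : ℂ)) = 0) :=
  statement16_general D DA DB k i hAS hpermA hpermB φ hφ ψ hψ Y hY1 hY2
end
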